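/- arXiv:1211.5084 — 7 statements merged into one kernel-verified Lean document; each statement's English description precedes it below -/
import Mathlib

section
/- (Dominance implies smaller expected distance in the first quadrant of q*.) Let p1 and p2 be points of ℝ² lying in the closed first quadrant of q*, i.e., a* ≤ x(p1) and b* ≤ y(p1). If p1 dominates p2, i.e., x(p1) ≤ x(p2) and y(p1) ≤ y(p2), then Ed(p1) ≤ Ed(p2). -/
open Finset

lemma mono1d (m : ℕ) (q w : Fin m → ℝ) (hw : ∀ i, 0 ≤ w i)
    (a x y : ℝ)
    (hmed : (∑ i, w i) / 2 ≤ ∑ i ∈ univ.filter (fun i => q i ≤ a), w i)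
    (hax : a ≤ x) (hxy : x ≤ y) :
    ∑ i, w i * |x - q i| ≤ ∑ i, w i * |y - q i| := by
  rw [← sub_nonneg, ← Finset.sum_sub_distrib]
  have hsplit := Finset.sum_filter_add_sum_filter_not (univ : Finset (Fin m))
    (fun i => q i ≤ x) (fun i => w i * |y - q i| - w i * |x - q i|)
  rw [← hsplit]
  have hWsplit := Finset.sum_filter_add_sum_filter_not (univ : Finset (Fin m))
    (fun i => q i ≤ x) w
  set S := univ.filter (fun i => q i ≤ x) with hS
  set Sc := univ.filter (fun i => ¬ q i ≤ x) with hSc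
  have hWS : (∑ i, w i) / 2 ≤ ∑ i ∈ S, w i := by
    refine le_trans hmed (Finset.sum_le_sum_of_subset_of_nonneg ?_ (fun i _ _ => hw i))
    intro i hi
    simp only [hS, Finset.mem_filter, Finset.mem_univ, true_and] at hi ⊢
    exact le_trans hi hax
  have h1 : ∑ i ∈ S, (w i * |y - q i| - w i * |x - q i|) = ∑ i ∈ S, w i * (y - x) := by
    apply Finset.sum_congr rfl
    intro i hi
    simp only [hS, Finset.mem_filter] at hi
    have hq : q i ≤ x := hi.2
    rw [abs_of_nonneg (by linarith), abs_of_nonneg (by linarith)]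
    ring
  have h2 : ∑ i ∈ Sc, (-(w i * (y - x))) ≤ ∑ i ∈ Sc, (w i * |y - q i| - w i * |x - q i|) := by
    apply Finset.sum_le_sum
    intro i hi
    have habs : |x - q i| - |y - q i| ≤ |x - y| := by
      have := abs_sub_abs_le_abs_sub (x - q i) (y - q i)
      simpa using this
    have hxy' : |x - y| = y - x := by rw [abs_sub_comm]; exact abs_of_nonneg (by linarith)
    nlinarith [hw i]
  have key : (y - x) * ((∑ i ∈ S, w i) - (∑ i ∈ Sc, w i)) ≤
      (∑ i ∈ S, (w i * |y - q i| - w i * |x - q i|)) +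
      (∑ i ∈ Sc, (w i * |y - q i| - w i * |x - q i|)) := by
    rw [h1]
    have hA : ∑ i ∈ S, w i * (y - x) = (∑ i ∈ S, w i) * (y - x) :=
      (Finset.sum_mul _ _ _).symm
    have hB : ∑ i ∈ Sc, (-(w i * (y - x))) = -((∑ i ∈ Sc, w i) * (y - x)) := by
      rw [Finset.sum_neg_distrib, Finset.sum_mul]
    rw [hB] at h2
    nlinarith [h2]
  refine le_trans ?_ key
  have hScW : ∑ i ∈ Sc, w i = (∑ i, w i) - ∑ i ∈ S, w i := by linarith [hWsplit]
  have hd : 0 ≤ y - x := by linarith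
  have : 0 ≤ (∑ i ∈ S, w i) - (∑ i ∈ Sc, w i) := by
    rw [hScW]; linarith
  positivity

/-- In the closed first quadrant of `q* = (a*, b*)`, if `p1` dominates `p2`
(i.e., `x(p1) ≤ x(p2)` and `y(p1) ≤ y(p2)`), then `Ed(p1) ≤ Ed(p2)`. -/
theorem dominance_implies_smaller_expected_distance
    (m : ℕ) (hm : 1 ≤ m) (q : Fin m → ℝ × ℝ) (w : Fin m → ℝ) (hw : ∀ i, 0 ≤ w i)
    (hW : 0 < ∑ i, w i)
    (a b : ℝ)
    (ha : ∃ j, a = (q j).1)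
    (hax : ∑ i ∈ univ.filter (fun i => (q i).1 < a), w i < (∑ i, w i) / 2)
    (hax' : (∑ i, w i) / 2 ≤ ∑ i ∈ univ.filter (fun i => (q i).1 ≤ a), w i)
    (hb : ∃ j, b = (q j).2)
    (hby : ∑ i ∈ univ.filter (fun i => (q i).2 < b), w i < (∑ i, w i) / 2)
    (hby' : (∑ i, w i) / 2 ≤ ∑ i ∈ univ.filter (fun i => (q i).2 ≤ b), w i)
    (p1 p2 : ℝ × ℝ)
    (hquad : a ≤ p1.1 ∧ b ≤ p1.2)
    (hdom : p1.1 ≤ p2.1 ∧ p1.2 ≤ p2.2) :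
    ∑ i, w i * (|p1.1 - (q i).1| + |p1.2 - (q i).2|) ≤
      ∑ i, w i * (|p2.1 - (q i).1| + |p2.2 - (q i).2|) := by
  have hx := mono1d m (fun i => (q i).1) w hw a p1.1 p2.1 hax' hquad.1 hdom.1
  have hy := mono1d m (fun i => (q i).2) w hw b p1.2 p2.2 hby' hquad.2 hdom.2
  have e1 : ∀ (p : ℝ × ℝ), ∑ i, w i * (|p.1 - (q i).1| + |p.2 - (q i).2|) =
      (∑ i, w i * |p.1 - (q i).1|) + ∑ i, w i * |p.2 - (q i).2| := by
    intro p
    rw [← Finset.sum_add_distrib]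
    apply Finset.sum_congr rfl; intro i _; ring
  rw [e1 p1, e1 p2]
  exact add_le_add hx hy
end

section
/- (Lemma 3: the expected nearest neighbor is a minimal point.) Let P¹ be a finite nonempty set of points of ℝ², each lying in the closed first quadrant of q* (i.e., x(p) ≥ a* and y(p) ≥ b* for all p ∈ P¹), and let M be the set of minimal points of P¹. Then min_{p ∈ M} Ed(p) = min_{p ∈ P¹} Ed(p); in particular the minimum of Ed over P¹ is attained at a minimal point of P¹. -/
open Finset

private lemma key_mono {m : ℕ} (c w : Fin m → ℝ) (hw : ∀ i, 0 ≤ w i) (a x x' : ℝ)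
    (hmed : (∑ i, w i) / 2 ≤ ∑ i ∈ univ.filter (fun i => c i ≤ a), w i)
    (hax : a ≤ x) (hxx : x ≤ x') :
    ∑ i, w i * |x - c i| ≤ ∑ i, w i * |x' - c i| := by
  have key : ∀ i : Fin m,
      (if c i ≤ x then w i * (x' - x) else -(w i * (x' - x)))
        ≤ w i * |x' - c i| - w i * |x - c i| := by
    intro i
    rcases le_or_gt (c i) x with h | h
    · simp only [if_pos h]
      have h1 : |x - c i| = x - c i := abs_of_nonneg (by linarith)
      have h2 : |x' - c i| = x' - c i := abs_of_nonneg (by linarith)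
      rw [h1, h2]; nlinarith [hw i]
    · simp only [if_neg (not_le.2 h)]
      have h3 : |x - c i| - |x' - c i| ≤ x' - x := by
        have h4 := abs_sub_abs_le_abs_sub (x - c i) (x' - c i)
        have h5 : |x - c i - (x' - c i)| = x' - x := by
          rw [show x - c i - (x' - c i) = -(x' - x) by ring, abs_neg,
            abs_of_nonneg (by linarith)]
        linarith
      nlinarith [hw i]
  have hA : (∑ i, w i) / 2 ≤ ∑ i ∈ univ.filter (fun i => c i ≤ x), w i := by
    refine hmed.trans (Finset.sum_le_sum_of_subset_of_nonneg ?_ (fun i _ _ => hw i))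
    intro i hi
    simp only [mem_filter, mem_univ, true_and] at *
    exact hi.trans hax
  have hsplit : (∑ i ∈ univ.filter (fun i => c i ≤ x), w i)
      + ∑ i ∈ univ.filter (fun i => ¬ c i ≤ x), w i = ∑ i, w i :=
    Finset.sum_filter_add_sum_filter_not _ _ _
  have h0 : 0 ≤ ∑ i, (if c i ≤ x then w i * (x' - x) else -(w i * (x' - x))) := by
    rw [Finset.sum_ite]
    have e1 : ∑ i ∈ univ.filter (fun i => c i ≤ x), w i * (x' - x)
        = (∑ i ∈ univ.filter (fun i => c i ≤ x), w i) * (x' - x) :=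
      (Finset.sum_mul _ _ _).symm
    have e2 : ∑ i ∈ univ.filter (fun i => ¬ c i ≤ x), -(w i * (x' - x))
        = -((∑ i ∈ univ.filter (fun i => ¬ c i ≤ x), w i) * (x' - x)) := by
      rw [Finset.sum_neg_distrib, Finset.sum_mul]
    rw [e1, e2]
    nlinarith [hA, hsplit]
  have hsum := Finset.sum_le_sum (fun i (_ : i ∈ univ) => key i)
  rw [Finset.sum_sub_distrib] at hsum
  linarith

/-- Lemma 3: For a finite nonempty set `P¹` contained in the closed first
quadrant of `q* = (a*, b*)`, the minimum of the expected distance over the set `M` of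
minimal points of `P¹` equals the minimum over all of `P¹`; in particular the minimum
of `Ed` over `P¹` is attained at a minimal point of `P¹`. -/
theorem enn_attained_at_minimal_point
    (m : ℕ) (hm : 1 ≤ m) (q : Fin m → ℝ × ℝ) (w : Fin m → ℝ) (hw : ∀ i, 0 ≤ w i)
    (hW : 0 < ∑ i, w i)
    (a b : ℝ)
    (ha : ∃ j, a = (q j).1)
    (hax : ∑ i ∈ univ.filter (fun i => (q i).1 < a), w i < (∑ i, w i) / 2)
    (hax' : (∑ i, w i) / 2 ≤ ∑ i ∈ univ.filter (fun i => (q i).1 ≤ a), w i)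
    (hb : ∃ j, b = (q j).2)
    (hby : ∑ i ∈ univ.filter (fun i => (q i).2 < b), w i < (∑ i, w i) / 2)
    (hby' : (∑ i, w i) / 2 ≤ ∑ i ∈ univ.filter (fun i => (q i).2 ≤ b), w i)
    (Ed : ℝ × ℝ → ℝ)
    (hEd : ∀ p, Ed p = ∑ i, w i * (|p.1 - (q i).1| + |p.2 - (q i).2|))
    (P1 : Finset (ℝ × ℝ)) (hne : P1.Nonempty)
    (hquad : ∀ p ∈ P1, a ≤ p.1 ∧ b ≤ p.2)
    (M : Finset (ℝ × ℝ))
    (hM : ∀ p, p ∈ M ↔ p ∈ P1 ∧ ∀ p' ∈ P1, p' ≠ p → ¬ (p'.1 ≤ p.1 ∧ p'.2 ≤ p.2)) :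
    sInf (Ed '' ↑M) = sInf (Ed '' ↑P1) ∧
      ∃ p ∈ M, ∀ p' ∈ P1, Ed p ≤ Ed p' := by
  -- Ed splits into two coordinate sums
  have hEd' : ∀ p : ℝ × ℝ, Ed p
      = (∑ i, w i * |p.1 - (q i).1|) + ∑ i, w i * |p.2 - (q i).2| := by
    intro p
    rw [hEd p, ← Finset.sum_add_distrib]
    exact Finset.sum_congr rfl (fun i _ => by ring)
  -- domination monotonicity on the quadrant
  have hdom : ∀ p p' : ℝ × ℝ, a ≤ p'.1 → b ≤ p'.2 → p'.1 ≤ p.1 → p'.2 ≤ p.2 →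
      Ed p' ≤ Ed p := by
    intro p p' h1 h2 h3 h4
    rw [hEd' p, hEd' p']
    exact add_le_add
      (key_mono (fun i => (q i).1) w hw a p'.1 p.1 hax' h1 h3)
      (key_mono (fun i => (q i).2) w hw b p'.2 p.2 hby' h2 h4)
  -- every point of P1 is dominated by some minimal point
  have hmin : ∀ p ∈ P1, ∃ r ∈ M, r.1 ≤ p.1 ∧ r.2 ≤ p.2 := by
    intro p hp
    obtain ⟨r, hr, hrmin⟩ := (P1.filter (fun s => s.1 ≤ p.1 ∧ s.2 ≤ p.2)).exists_min_image
      (fun s => s.1 + s.2) ⟨p, by simp [hp]⟩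
    simp only [mem_filter] at hr
    refine ⟨r, (hM r).2 ⟨hr.1, ?_⟩, hr.2⟩
    intro p' hp' hne' hdom'
    have hp'S : p' ∈ P1.filter (fun s => s.1 ≤ p.1 ∧ s.2 ≤ p.2) :=
      mem_filter.2 ⟨hp', hdom'.1.trans hr.2.1, hdom'.2.trans hr.2.2⟩
    have hle := hrmin p' hp'S
    have he : p'.1 = r.1 ∧ p'.2 = r.2 := by
      exact ⟨le_antisymm hdom'.1 (by linarith [hdom'.2]), le_antisymm hdom'.2 (by linarith [hdom'.1])⟩
    exact hne' (Prod.ext he.1 he.2)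
  -- global minimizer of Ed on P1
  obtain ⟨p0, hp0, hp0min⟩ := P1.exists_min_image Ed hne
  obtain ⟨m0, hm0M, hm0dom⟩ := hmin p0 hp0
  have hm0P1 : m0 ∈ P1 := ((hM m0).1 hm0M).1
  have hm0le : ∀ p' ∈ P1, Ed m0 ≤ Ed p' := by
    intro p' hp'
    have h1 := hdom p0 m0 (hquad m0 hm0P1).1 (hquad m0 hm0P1).2 hm0dom.1 hm0dom.2
    exact h1.trans (hp0min p' hp')
  refine ⟨?_, m0, hm0M, hm0le⟩
  have hInfM : sInf (Ed '' ↑M) = Ed m0 := by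
    refine IsLeast.csInf_eq ⟨⟨m0, hm0M, rfl⟩, ?_⟩
    rintro _ ⟨r, hr, rfl⟩
    exact hm0le r ((hM r).1 hr).1
  have hInfP : sInf (Ed '' ↑P1) = Ed m0 := by
    refine IsLeast.csInf_eq ⟨⟨m0, hm0P1, rfl⟩, ?_⟩
    rintro _ ⟨r, hr, rfl⟩
    exact hm0le r hr
  rw [hInfM, hInfP]
end

section
/- (Combinatorial core of Lemma 5: an antichain meets few grid cells.) Let X and Y be finite sets of real numbers and let S be a finite set of points in ℝ² that is an antichain under dominance: for any two distinct points p, p' ∈ S it is not the case that x(p) ≤ x(p') and y(p) ≤ y(p'). Assign to each p ∈ S its cell index cell(p) = (|{c ∈ X : c < x(p)}|, |{c ∈ Y : c < y(p)}|). Then the number of distinct values of cell(p) over p ∈ S is at most |X| + |Y| + 1. -/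
/-!
Ordered by abscissa, the points of an antichain descend, so their cells move weakly right and
weakly down. Hence distinct cells met have distinct `column - row`, an integer in
`[-|Y|, |X|]`.
-/

open Finset

theorem monotone_card_filter_lt {α : Type*} [Preorder α] [DecidableLT α] (X : Finset α) :
    Monotone fun a => (X.filter (· < a)).card :=
  fun _ _ hab => card_le_card <| monotone_filter_right _ fun _ _ hc => hc.trans_le hab

theorem IsAntichain.snd_le_of_fst_le {α β : Type*} [Preorder α] [LinearOrder β]
    {s : Set (α × β)} (hs : IsAntichain (· ≤ ·) s) {p q : α × β} (hp : p ∈ s) (hq : q ∈ s)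
    (h : p.1 ≤ q.1) : q.2 ≤ p.2 := by
  by_contra! h₂
  exact hs hp hq (by rintro rfl; exact h₂.false) ⟨h, h₂.le⟩

theorem IsAntichain.injOn_sub_image_prodMap {α β : Type*} [LinearOrder α] [LinearOrder β]
    {s : Set (α × β)} (hs : IsAntichain (· ≤ ·) s) {f : α → ℕ} {g : β → ℕ}
    (hf : Monotone f) (hg : Monotone g) :
    Set.InjOn (fun c : ℕ × ℕ => (c.1 : ℤ) - c.2) (Prod.map f g '' s) := by
  have eq_of_fst_le : ∀ p ∈ s, ∀ q ∈ s, p.1 ≤ q.1 →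
      (f p.1 : ℤ) - g p.2 = f q.1 - g q.2 → Prod.map f g p = Prod.map f g q := by
    intro p hp q hq h hdiff
    have h₁ := hf h
    have h₂ := hg (hs.snd_le_of_fst_le hp hq h)
    exact Prod.ext (by dsimp; omega) (by dsimp; omega)
  rintro _ ⟨p, hp, rfl⟩ _ ⟨q, hq, rfl⟩ hdiff
  rcases le_total p.1 q.1 with h | h
  · exact eq_of_fst_le p hp q hq h hdiff
  · exact (eq_of_fst_le q hq p hp h hdiff.symm).symm

theorem card_le_of_injOn_fst_sub_snd {T : Finset (ℕ × ℕ)} {m n : ℕ}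
    (hT : ∀ c ∈ T, c.1 ≤ m ∧ c.2 ≤ n) (hinj : Set.InjOn (fun c : ℕ × ℕ => (c.1 : ℤ) - c.2) T) :
    T.card ≤ m + n + 1 := by
  have hmaps : ∀ c ∈ T, (c.1 : ℤ) - c.2 ∈ Icc (-(n : ℤ)) m := by
    intro c hc
    have := hT c hc
    simp only [mem_Icc]
    omega
  calc T.card ≤ (Icc (-(n : ℤ)) m).card := card_le_card_of_injOn _ hmaps hinj
    _ = m + n + 1 := by rw [Int.card_Icc]; omega

/-- combinatorial core of Lemma 5: An antichain under dominance meets at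
most `|X| + |Y| + 1` cells of the grid determined by the vertical lines through `X` and
the horizontal lines through `Y`. -/
theorem antichain_meets_few_cells
    (X Y : Finset ℝ) (S : Finset (ℝ × ℝ))
    (hanti : ∀ p ∈ S, ∀ p' ∈ S, p ≠ p' → ¬ (p.1 ≤ p'.1 ∧ p.2 ≤ p'.2)) :
    (S.image (fun p => ((X.filter (fun c => c < p.1)).card,
                        (Y.filter (fun c => c < p.2)).card))).card
      ≤ X.card + Y.card + 1 := by
  have hS : IsAntichain (· ≤ ·) (S : Set (ℝ × ℝ)) := fun p hp q hq hpq => hanti p hp q hq hpq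
  have hinj := hS.injOn_sub_image_prodMap (monotone_card_filter_lt X) (monotone_card_filter_lt Y)
  refine card_le_of_injOn_fst_sub_snd (fun c hc => ?_) (by rw [coe_image]; exact hinj)
  obtain ⟨p, -, rfl⟩ := mem_image.1 hc
  exact ⟨card_filter_le _ _, card_filter_le _ _⟩
end

section
/- (Correctness of the merge step for top-k selection.) Let S be a finite set, f : S → ℝ injective on S, and suppose S = S_1 ∪ ⋯ ∪ S_r is a cover of S by finitely many subsets. Let k be a positive integer, let T ⊆ S satisfy |T| = min(k, |S|) and f(t) < f(s) for all t ∈ T and s ∈ S \ T, and for each j let T_j ⊆ S_j satisfy |T_j| = min(k, |S_j|) and f(t) < f(s) for all t ∈ T_j and s ∈ S_j \ T_j. Then T ⊆ T_1 ∪ ⋯ ∪ T_r; that is, every one of the k smallest elements of S under f is among the k smallest elements of some S_j. -/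
open Finset

/-- correctness of the merge step for top-`k` selection: If `S` is covered
by `S_1, …, S_r`, `T` is a set of the `k` smallest elements of `S` under an injective
function `f`, and each `T_j` is a set of the `k` smallest elements of `S_j`, then
`T ⊆ T_1 ∪ ⋯ ∪ T_r`. -/
theorem topk_merge_correct
    {α : Type*} [DecidableEq α]
    (S : Finset α) (f : α → ℝ) (hf : Set.InjOn f ↑S)
    (r : ℕ) (Ssub : Fin r → Finset α)
    (hcover : S = Finset.univ.biUnion Ssub)
    (k : ℕ) (hk : 0 < k)
    (T : Finset α) (hTS : T ⊆ S) (hTcard : T.card = min k S.card)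
    (hTtop : ∀ t ∈ T, ∀ s ∈ S \ T, f t < f s)
    (Tsub : Fin r → Finset α)
    (hTsubS : ∀ j, Tsub j ⊆ Ssub j)
    (hTsubcard : ∀ j, (Tsub j).card = min k (Ssub j).card)
    (hTsubtop : ∀ j, ∀ t ∈ Tsub j, ∀ s ∈ Ssub j \ Tsub j, f t < f s) :
    T ⊆ Finset.univ.biUnion Tsub := by
  intro t ht
  have htS : t ∈ S := hTS ht
  rw [hcover, Finset.mem_biUnion] at htS
  obtain ⟨j, -, htj⟩ := htS
  rw [Finset.mem_biUnion]
  refine ⟨j, Finset.mem_univ j, ?_⟩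
  by_contra htT
  -- every element of Tsub j has smaller f-value than t
  have hlt : ∀ u ∈ Tsub j, f u < f t := fun u hu =>
    hTsubtop j u hu t (Finset.mem_sdiff.mpr ⟨htj, htT⟩)
  -- Tsub j ⊆ T
  have hsub : Tsub j ⊆ T := by
    intro u hu
    by_contra huT
    have huS : u ∈ S := by
      rw [hcover, Finset.mem_biUnion]
      exact ⟨j, Finset.mem_univ j, hTsubS j hu⟩
    have := hTtop t ht u (Finset.mem_sdiff.mpr ⟨huS, huT⟩)
    exact absurd (hlt u hu) (not_lt.mpr this.le)
  -- cardinalities: Ssub j is strictly bigger than Tsub j, so |Tsub j| = k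
  have hcard : (Tsub j).card = k := by
    have hlt' : (Tsub j).card < (Ssub j).card :=
      Finset.card_lt_card (Finset.ssubset_iff_of_subset (hTsubS j) |>.mpr ⟨t, htj, htT⟩)
    have := hTsubcard j
    omega
  -- then insert t gives k+1 ≤ |T| ≤ k
  have hins : insert t (Tsub j) ⊆ T := Finset.insert_subset ht hsub
  have hc : k + 1 ≤ T.card := by
    have := Finset.card_le_card hins
    rwa [Finset.card_insert_of_notMem htT, hcard] at this
  omega
end

section
/- (Correctness of scanning in 1-D.) Let q* be a weighted median of the weighted point set, and let S be a finite set of real numbers with p ≥ q* for every p ∈ S. If T ⊆ S satisfies t ≤ s for all t ∈ T and s ∈ S \ T (i.e., T consists of the |T| smallest elements of S), then Ed(t) ≤ Ed(s) for all t ∈ T and s ∈ S \ T; that is, the |T| leftmost points of S are top-|T| expected nearest neighbors in S. -/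
open Finset

lemma ed_mono (m : ℕ) (q w : Fin m → ℝ) (hw : ∀ i, 0 ≤ w i)
    (qs : ℝ)
    (hmed₂ : (∑ i, w i) / 2 ≤ ∑ i ∈ univ.filter (fun i => q i ≤ qs), w i)
    (a b : ℝ) (ha : qs ≤ a) (hab : a ≤ b) :
    ∑ i, w i * |a - q i| ≤ ∑ i, w i * |b - q i| := by
  have key : ∀ i : Fin m,
      w i * (if q i ≤ qs then (b - a) else -(b - a)) ≤ w i * (|b - q i| - |a - q i|) := by
    intro i
    apply mul_le_mul_of_nonneg_left _ (hw i)
    by_cases h : q i ≤ qs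
    · simp only [h, if_true]
      have h1 : q i ≤ a := h.trans ha
      rw [abs_of_nonneg (by linarith), abs_of_nonneg (by linarith)]
      linarith
    · simp only [h, if_false]
      have := abs_sub_abs_le_abs_sub (a - q i) (b - q i)
      have h2 : |a - q i - (b - q i)| = b - a := by
        rw [show a - q i - (b - q i) = -(b - a) by ring, abs_neg, abs_of_nonneg (by linarith)]
      linarith
  have hsum := Finset.sum_le_sum (s := univ) (fun i _ => key i)
  have hsplit : ∑ i, w i * (if q i ≤ qs then (b - a) else -(b - a))
      = (b - a) * ((∑ i ∈ univ.filter (fun i => q i ≤ qs), w i)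
        - (∑ i ∈ univ.filter (fun i => ¬ q i ≤ qs), w i)) := by
    rw [← Finset.sum_filter_add_sum_filter_not univ (fun i => q i ≤ qs)
        (fun i => w i * (if q i ≤ qs then (b - a) else -(b - a)))]
    have h1 : ∑ i ∈ univ.filter (fun i => q i ≤ qs),
        w i * (if q i ≤ qs then (b - a) else -(b - a))
        = (∑ i ∈ univ.filter (fun i => q i ≤ qs), w i) * (b - a) := by
      rw [Finset.sum_mul]
      exact Finset.sum_congr rfl (fun i hi => by rw [if_pos (Finset.mem_filter.mp hi).2])
    have h2 : ∑ i ∈ univ.filter (fun i => ¬ q i ≤ qs),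
        w i * (if q i ≤ qs then (b - a) else -(b - a))
        = (∑ i ∈ univ.filter (fun i => ¬ q i ≤ qs), w i) * (-(b - a)) := by
      rw [Finset.sum_mul]
      exact Finset.sum_congr rfl (fun i hi => by rw [if_neg (Finset.mem_filter.mp hi).2])
    rw [h1, h2]
    ring
  have htot : (∑ i ∈ univ.filter (fun i => q i ≤ qs), w i)
      + (∑ i ∈ univ.filter (fun i => ¬ q i ≤ qs), w i) = ∑ i, w i :=
    Finset.sum_filter_add_sum_filter_not univ (fun i => q i ≤ qs) w
  have h0 : 0 ≤ ∑ i, w i * (if q i ≤ qs then (b - a) else -(b - a)) := by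
    rw [hsplit]
    apply mul_nonneg (by linarith)
    linarith
  have : 0 ≤ ∑ i, w i * (|b - q i| - |a - q i|) := le_trans h0 hsum
  have hexp : ∑ i, w i * (|b - q i| - |a - q i|)
      = (∑ i, w i * |b - q i|) - ∑ i, w i * |a - q i| := by
    rw [← Finset.sum_sub_distrib]
    exact Finset.sum_congr rfl (fun i _ => by ring)
  rw [hexp] at this
  linarith

/-- correctness of scanning in 1-D: If all points of a finite set `S` of
reals lie to the right of the weighted median `q*`, and `T ⊆ S` consists of the `|T|`
smallest elements of `S`, then every point of `T` has expected distance at most that of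
every point of `S \ T`. -/
theorem scan_correct_1d
    (m : ℕ) (hm : 1 ≤ m) (q w : Fin m → ℝ) (hw : ∀ i, 0 ≤ w i)
    (hW : 0 < ∑ i, w i)
    (qs : ℝ) (hqs : ∃ j, qs = q j)
    (hmed₁ : ∑ i ∈ univ.filter (fun i => q i < qs), w i < (∑ i, w i) / 2)
    (hmed₂ : (∑ i, w i) / 2 ≤ ∑ i ∈ univ.filter (fun i => q i ≤ qs), w i)
    (S : Finset ℝ) (hS : ∀ p ∈ S, qs ≤ p)
    (T : Finset ℝ) (hTS : T ⊆ S)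
    (hT : ∀ t ∈ T, ∀ s ∈ S \ T, t ≤ s) :
    ∀ t ∈ T, ∀ s ∈ S \ T,
      ∑ i, w i * |t - q i| ≤ ∑ i, w i * |s - q i| := by
  intro t ht s hs
  exact ed_mono m q w hw qs hmed₂ t s (hS t (hTS ht)) (hT t ht s hs)
end

section
/- (Generalization of Lemma 7: the i-th expected nearest neighbor is a minimal point of the remaining set.) Let P¹ be a finite nonempty set of points of ℝ², each lying in the closed first quadrant of q* (i.e., x(p) ≥ a* and y(p) ≥ b* for all p ∈ P¹), and suppose Ed is injective on P¹. Let z_1, z_2, …, z_{|P¹|} be the enumeration of P¹ in strictly increasing order of Ed. Then for every i with 1 ≤ i ≤ |P¹|, the point z_i is a minimal point of the set P¹ \ {z_1, …, z_{i−1}}. -/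
open Finset

lemma mono_aux (m : ℕ) (w : Fin m → ℝ) (hw : ∀ i, 0 ≤ w i)
    (c : Fin m → ℝ) (a x x' : ℝ) (hax : a ≤ x) (hxx : x ≤ x')
    (hmed : (∑ i, w i) / 2 ≤ ∑ i ∈ univ.filter (fun i => c i ≤ a), w i) :
    ∑ i, w i * |x - c i| ≤ ∑ i, w i * |x' - c i| := by
  set A := ∑ i ∈ univ.filter (fun i => c i ≤ a), w i with hA
  have hsplit := Finset.sum_filter_add_sum_filter_not (univ : Finset (Fin m))
      (fun i => c i ≤ a) w
  have h1 : ∑ i ∈ univ.filter (fun i => c i ≤ a), (w i * |x' - c i| - w i * |x - c i|)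
      = (x' - x) * A := by
    rw [hA, Finset.mul_sum]
    apply Finset.sum_congr rfl
    intro i hi
    simp only [Finset.mem_filter] at hi
    have h2 : c i ≤ x := le_trans hi.2 hax
    rw [abs_of_nonneg (by linarith), abs_of_nonneg (by linarith)]
    ring
  have h2 : ∀ i ∈ univ.filter (fun i => ¬ c i ≤ a),
      -(w i * (x' - x)) ≤ w i * |x' - c i| - w i * |x - c i| := by
    intro i _
    have habs : -(x' - x) ≤ |x' - c i| - |x - c i| := by
      have := abs_sub_abs_le_abs_sub (x - c i) (x' - c i)
      have : |x - c i - (x' - c i)| = x' - x := by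
        rw [show x - c i - (x' - c i) = -(x' - x) by ring, abs_neg,
          abs_of_nonneg (by linarith)]
      linarith [abs_sub_abs_le_abs_sub (x - c i) (x' - c i)]
    nlinarith [hw i]
  have h3 : ∑ i ∈ univ.filter (fun i => ¬ c i ≤ a), -(w i * (x' - x))
      ≤ ∑ i ∈ univ.filter (fun i => ¬ c i ≤ a), (w i * |x' - c i| - w i * |x - c i|) :=
    Finset.sum_le_sum h2
  have h4 : ∑ i ∈ univ.filter (fun i => ¬ c i ≤ a), -(w i * (x' - x))
      = -((x' - x) * ((∑ i, w i) - A)) := by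
    rw [show (∑ i, w i) - A = ∑ i ∈ univ.filter (fun i => ¬ c i ≤ a), w i by
      rw [hA]; linarith [hsplit], Finset.mul_sum, ← Finset.sum_neg_distrib]
    apply Finset.sum_congr rfl
    intro i _; ring
  have htot : 0 ≤ ∑ i, (w i * |x' - c i| - w i * |x - c i|) := by
    rw [← Finset.sum_filter_add_sum_filter_not (univ : Finset (Fin m)) (fun i => c i ≤ a)]
    rw [h1]
    nlinarith [h3, h4]
  have := Finset.sum_sub_distrib (f := fun i => w i * |x' - c i|)
      (g := fun i => w i * |x - c i|) (s := (univ : Finset (Fin m)))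
  linarith [htot, this]

/-- generalization of Lemma 7: If `z_1, z_2, …` enumerates a finite set
`P¹` (contained in the closed first quadrant of `q* = (a*, b*)`) in strictly increasing
order of expected distance, then each `z_i` is a minimal point of
`P¹ \ {z_1, …, z_{i−1}}`. -/
theorem ith_enn_is_minimal_point
    (m : ℕ) (hm : 1 ≤ m) (q : Fin m → ℝ × ℝ) (w : Fin m → ℝ) (hw : ∀ i, 0 ≤ w i)
    (hW : 0 < ∑ i, w i)
    (a b : ℝ)
    (ha : ∃ j, a = (q j).1)
    (hax : ∑ i ∈ univ.filter (fun i => (q i).1 < a), w i < (∑ i, w i) / 2)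
    (hax' : (∑ i, w i) / 2 ≤ ∑ i ∈ univ.filter (fun i => (q i).1 ≤ a), w i)
    (hb : ∃ j, b = (q j).2)
    (hby : ∑ i ∈ univ.filter (fun i => (q i).2 < b), w i < (∑ i, w i) / 2)
    (hby' : (∑ i, w i) / 2 ≤ ∑ i ∈ univ.filter (fun i => (q i).2 ≤ b), w i)
    (Ed : ℝ × ℝ → ℝ)
    (hEd : ∀ p, Ed p = ∑ i, w i * (|p.1 - (q i).1| + |p.2 - (q i).2|))
    (P1 : Finset (ℝ × ℝ)) (hne : P1.Nonempty)
    (hquad : ∀ p ∈ P1, a ≤ p.1 ∧ b ≤ p.2)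
    (hinj : Set.InjOn Ed ↑P1)
    (z : Fin P1.card → ℝ × ℝ)
    (hzmem : ∀ i, z i ∈ P1)
    (hzinj : Function.Injective z)
    (hzmono : ∀ i j : Fin P1.card, i < j → Ed (z i) < Ed (z j)) :
    ∀ i : Fin P1.card, ∀ p ∈ P1,
      (∀ j : Fin P1.card, j < i → p ≠ z j) → p ≠ z i →
        ¬ (p.1 ≤ (z i).1 ∧ p.2 ≤ (z i).2) := by

  rintro i p hp hprev hpne ⟨hx, hy⟩
  -- z is surjective onto P1
  have himg : Finset.image z univ = P1 := by
    apply Finset.eq_of_subset_of_card_le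
    · intro x hx
      obtain ⟨k, _, rfl⟩ := Finset.mem_image.mp hx
      exact hzmem k
    · rw [Finset.card_image_of_injective _ hzinj, Finset.card_univ, Fintype.card_fin]
  obtain ⟨k, _, hk⟩ := Finset.mem_image.mp (himg ▸ hp)
  have hap := (hquad p hp).1
  have hbp := (hquad p hp).2
  have hle : Ed p ≤ Ed (z i) := by
    rw [hEd, hEd]
    have e1 : ∀ u : ℝ × ℝ, ∑ j, w j * (|u.1 - (q j).1| + |u.2 - (q j).2|)
        = ∑ j, w j * |u.1 - (q j).1| + ∑ j, w j * |u.2 - (q j).2| := by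
      intro u
      rw [← Finset.sum_add_distrib]
      apply Finset.sum_congr rfl
      intro j _; ring
    rw [e1, e1]
    have hmx := mono_aux m w hw (fun j => (q j).1) a p.1 (z i).1 hap hx hax'
    have hmy := mono_aux m w hw (fun j => (q j).2) b p.2 (z i).2 hbp hy hby'
    exact add_le_add hmx hmy
  have hne' : Ed p ≠ Ed (z i) := fun h => hpne (hinj hp (hzmem i) h)
  have hlt : Ed p < Ed (z i) := lt_of_le_of_ne hle hne'
  have hki : k < i := by
    rcases lt_trichotomy k i with h | h | h
    · exact h
    · exact absurd (h ▸ hk) (Ne.symm hpne)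
    · exact absurd (hk ▸ hzmono i k h) (not_lt.mpr (le_of_lt hlt))
  exact hprev k hki hk.symm
end

section
/- (The ENN within a cell lies on the convex hull.) Let x_l < x_r and y_b < y_t be reals such that every q_i satisfies x(q_i) ≤ x_l or x(q_i) ≥ x_r, and also y(q_i) ≤ y_b or y(q_i) ≥ y_t, and let C = [x_l, x_r] × [y_b, y_t]. Let F be a finite nonempty set of points contained in C. Then there exists a point p ∈ F such that Ed(p) ≤ Ed(p') for all p' ∈ F and p is an extreme point of the convex hull of F. -/
/-!
No site `q i` lies strictly between the lines bounding the cell, so on the cell every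
`|x - x(q i)|` and `|y - y(q i)|` is affine, and hence so is `Ed`. The minimizers of an affine
function on the compact set `convexHull F` form an exposed face; by Krein–Milman that face has an
extreme point, which is extreme in the hull, therefore lies in `F`, and minimizes over `F` too.
-/

open Finset

section ExtremeMinimizer

variable {E : Type*} [AddCommGroup E] [Module ℝ E] [TopologicalSpace E] [T2Space E]
  [IsTopologicalAddGroup E] [ContinuousSMul ℝ E] [LocallyConvexSpace ℝ E]

theorem Finset.exists_mem_extremePoints_convexHull_isMinOn (F : Finset E) (hne : F.Nonempty)
    (l : E →L[ℝ] ℝ) :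
    ∃ p ∈ F, IsMinOn l F p ∧ p ∈ Set.extremePoints ℝ (convexHull ℝ (F : Set E)) := by
  set K := convexHull ℝ (F : Set E)
  have hK : IsCompact K := F.finite_toSet.isCompact_convexHull ℝ
  obtain ⟨z, hzK, hz⟩ := hK.exists_isMinOn (hne.to_set.mono (subset_convexHull ℝ _))
    l.continuous.continuousOn
  have hExposed : IsExposed ℝ K {y ∈ K | ∀ x ∈ K, (-l) x ≤ (-l) y} := fun _ => ⟨-l, rfl⟩
  obtain ⟨p, hp⟩ := (hExposed.isCompact hK).extremePoints_nonempty
    ⟨z, hzK, fun x hx => neg_le_neg (hz hx)⟩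
  have hpK : p ∈ Set.extremePoints ℝ K := hExposed.isExtreme.extremePoints_subset_extremePoints hp
  refine ⟨p, extremePoints_convexHull_subset hpK, fun x hx => ?_, hpK⟩
  simpa using hp.1.2 x (subset_convexHull ℝ _ hx)

theorem Finset.exists_mem_extremePoints_convexHull_isMinOn_of_eqOn_affine (F : Finset E)
    (hne : F.Nonempty) (f : E → ℝ) (l : E →L[ℝ] ℝ) (c : ℝ) (hf : ∀ p ∈ F, f p = l p + c) :
    ∃ p ∈ F, IsMinOn f F p ∧ p ∈ Set.extremePoints ℝ (convexHull ℝ (F : Set E)) := by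
  obtain ⟨p, hpF, hmin, hext⟩ := F.exists_mem_extremePoints_convexHull_isMinOn hne l
  refine ⟨p, hpF, fun x hx => ?_, hext⟩
  simpa [hf p hpF, hf x hx] using hmin hx

end ExtremeMinimizer

noncomputable def sideSign (a s : ℝ) : ℝ := if s ≤ a then 1 else -1

theorem abs_sub_eq_sideSign_mul {a b s t : ℝ} (ht : t ∈ Set.Icc a b) (hs : s ≤ a ∨ b ≤ s) :
    |t - s| = sideSign a s * (t - s) := by
  obtain ⟨hat, htb⟩ := ht
  unfold sideSign
  split_ifs with h
  · rw [abs_of_nonneg (by linarith), one_mul]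
  · rw [abs_of_nonpos (by rcases hs with hs | hs <;> linarith), neg_one_mul]

theorem sum_weighted_l1_eq_affine_on_cell {ι : Type*} (s : Finset ι) (q : ι → ℝ × ℝ)
    (w : ι → ℝ) {xl xr yb yt : ℝ}
    (hqx : ∀ i, (q i).1 ≤ xl ∨ xr ≤ (q i).1) (hqy : ∀ i, (q i).2 ≤ yb ∨ yt ≤ (q i).2)
    {p : ℝ × ℝ} (hp : p ∈ Set.Icc (xl, yb) (xr, yt)) :
    ∑ i ∈ s, w i * (|p.1 - (q i).1| + |p.2 - (q i).2|) =
      (∑ i ∈ s, w i * sideSign xl (q i).1) * p.1 + (∑ i ∈ s, w i * sideSign yb (q i).2) * p.2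
        - ∑ i ∈ s, w i * (sideSign xl (q i).1 * (q i).1 + sideSign yb (q i).2 * (q i).2) := by
  obtain ⟨⟨hxl, hyb⟩, ⟨hxr, hyt⟩⟩ := hp
  rw [sum_mul, sum_mul, ← sum_add_distrib, ← sum_sub_distrib]
  refine sum_congr rfl fun i _ => ?_
  rw [abs_sub_eq_sideSign_mul ⟨hxl, hxr⟩ (hqx i), abs_sub_eq_sideSign_mul ⟨hyb, hyt⟩ (hqy i)]
  ring

theorem enn_in_cell_on_convex_hull_general
    (m : ℕ) (q : Fin m → ℝ × ℝ) (w : Fin m → ℝ)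
    (xl xr yb yt : ℝ)
    (hqx : ∀ i, (q i).1 ≤ xl ∨ xr ≤ (q i).1)
    (hqy : ∀ i, (q i).2 ≤ yb ∨ yt ≤ (q i).2)
    (Ed : ℝ × ℝ → ℝ)
    (hEd : ∀ p, Ed p = ∑ i, w i * (|p.1 - (q i).1| + |p.2 - (q i).2|))
    (F : Finset (ℝ × ℝ)) (hne : F.Nonempty)
    (hF : ∀ p ∈ F, (xl ≤ p.1 ∧ p.1 ≤ xr) ∧ (yb ≤ p.2 ∧ p.2 ≤ yt)) :
    ∃ p ∈ F, (∀ p' ∈ F, Ed p ≤ Ed p') ∧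
      p ∈ Set.extremePoints ℝ (convexHull ℝ (↑F : Set (ℝ × ℝ))) := by
  set a := ∑ i, w i * sideSign xl (q i).1
  set b := ∑ i, w i * sideSign yb (q i).2
  set c := ∑ i, w i * (sideSign xl (q i).1 * (q i).1 + sideSign yb (q i).2 * (q i).2)
  have hEd_affine : ∀ p ∈ F,
      Ed p = (a • ContinuousLinearMap.fst ℝ ℝ ℝ + b • ContinuousLinearMap.snd ℝ ℝ ℝ) p + -c := by
    intro p hp
    obtain ⟨⟨hxl, hxr⟩, hyb, hyt⟩ := hF p hp
    rw [hEd, sum_weighted_l1_eq_affine_on_cell _ q w hqx hqy ⟨⟨hxl, hyb⟩, ⟨hxr, hyt⟩⟩]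
    simp only [add_apply, smul_apply,
      ContinuousLinearMap.coe_fst', ContinuousLinearMap.coe_snd', smul_eq_mul]
    ring
  obtain ⟨p, hpF, hmin, hext⟩ :=
    F.exists_mem_extremePoints_convexHull_isMinOn_of_eqOn_affine hne Ed _ _ hEd_affine
  exact ⟨p, hpF, fun p' hp' => hmin hp', hext⟩

/-- Within a cell `C = [x_l, x_r] × [y_b, y_t]` of the arrangement, the
expected nearest neighbor among a finite nonempty set `F ⊆ C` can be chosen to be an
extreme point of the convex hull of `F`. -/
theorem enn_in_cell_on_convex_hull
    (m : ℕ) (hm : 1 ≤ m) (q : Fin m → ℝ × ℝ) (w : Fin m → ℝ) (hw : ∀ i, 0 ≤ w i)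
    (xl xr yb yt : ℝ) (hx : xl < xr) (hy : yb < yt)
    (hqx : ∀ i, (q i).1 ≤ xl ∨ xr ≤ (q i).1)
    (hqy : ∀ i, (q i).2 ≤ yb ∨ yt ≤ (q i).2)
    (Ed : ℝ × ℝ → ℝ)
    (hEd : ∀ p, Ed p = ∑ i, w i * (|p.1 - (q i).1| + |p.2 - (q i).2|))
    (F : Finset (ℝ × ℝ)) (hne : F.Nonempty)
    (hF : ∀ p ∈ F, (xl ≤ p.1 ∧ p.1 ≤ xr) ∧ (yb ≤ p.2 ∧ p.2 ≤ yt)) :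
    ∃ p ∈ F, (∀ p' ∈ F, Ed p ≤ Ed p') ∧
      p ∈ Set.extremePoints ℝ (convexHull ℝ (↑F : Set (ℝ × ℝ))) :=
  enn_in_cell_on_convex_hull_general m q w xl xr yb yt hqx hqy Ed hEd F hne hF
end
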